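/- If σ is a chain decomposed as a disjoint union σ = σ₁ ⊔ σ₂ ⊔ ⋯ into groups of mutually isomorphic connected components (no two groups sharing isomorphic components), and τ is a trivial chain such that σ ⊔ τ is trivial, then σ is itself trivial. -/

import Mathlib

/-!
Chains are modeled by their decomposition into isomorphism classes of connected
components with signed multiplicities: a chain is a finitely supported function
`σ : ι →₀ ℤ` assigning to each isomorphism class `ι` of components its signed
count.  `sym i` records that the components in class `i` admit an
orientation-reversing self-isomorphism.  A chain is *trivial* iff for each
class either the signed count is zero or the class is symmetric.  Disjoint
union is addition.

A chain is trivial exactly when it vanishes on every non-symmetric class, so the trivial chains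
form a subgroup of `ι →₀ ℤ`, and `σ = (σ + τ) - τ` lies in it.
-/

def IsTrivialChain {ι : Type*} (sym : ι → Prop) (σ : ι →₀ ℤ) : Prop :=
  ∀ i, σ i = 0 ∨ sym i

theorem isTrivialChain_iff {ι : Type*} {sym : ι → Prop} {σ : ι →₀ ℤ} :
    IsTrivialChain sym σ ↔ ∀ i, ¬sym i → σ i = 0 :=
  forall_congr' fun _ => or_iff_not_imp_right

def trivialChains {ι : Type*} (sym : ι → Prop) : AddSubgroup (ι →₀ ℤ) where
  carrier := {σ | IsTrivialChain sym σ}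
  zero_mem' := isTrivialChain_iff.2 fun _ _ => rfl
  add_mem' {σ τ} hσ hτ := isTrivialChain_iff.2 fun i hi => by
    rw [Finsupp.add_apply, isTrivialChain_iff.1 hσ i hi, isTrivialChain_iff.1 hτ i hi, add_zero]
  neg_mem' {σ} hσ := isTrivialChain_iff.2 fun i hi => by
    rw [Finsupp.neg_apply, isTrivialChain_iff.1 hσ i hi, neg_zero]

/-- If `τ` is a trivial chain and the disjoint union `σ ⊔ τ` is trivial,
then `σ` is itself trivial. -/
theorem trivial_of_union_trivial {ι : Type*} (sym : ι → Prop) (σ τ : ι →₀ ℤ)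
    (hτ : IsTrivialChain sym τ) (hστ : IsTrivialChain sym (σ + τ)) :
    IsTrivialChain sym σ := by
  have h : σ + τ - τ ∈ trivialChains sym := sub_mem hστ hτ
  rwa [add_sub_cancel_right] at h
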